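/- arXiv:1811.01652 — 2 statements merged into one kernel-verified Lean document; each statement's English description precedes it below -/
import Mathlib

section
/- Let X be a nontrivial real Banach space and let n ≥ 2 be an integer. The following are equivalent: (i) X is a Hilbert space, i.e., the norm of X satisfies the parallelogram law ‖x+y‖² + ‖x−y‖² = 2‖x‖² + 2‖y‖² for all x, y ∈ X; (ii) C̄_NJ^{(n)}(X) = 1; (iii) C̲_NJ^{(n)}(X) = 1. -/
open Finset MeasureTheory

noncomputable def njRatio {X : Type*} [NormedAddCommGroup X] [NormedSpace ℝ X]
    {m : ℕ} (x0 : X) (y : Fin m → X) : ℝ :=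
  (∑ ε : Fin m → Bool, ‖x0 + ∑ j, (if ε j then (1 : ℝ) else -1) • y j‖ ^ 2) /
    (2 ^ m * (‖x0‖ ^ 2 + ∑ j, ‖y j‖ ^ 2))

noncomputable def upperNJ (X : Type*) [NormedAddCommGroup X] [NormedSpace ℝ X] (n : ℕ) : ℝ :=
  sSup {c : ℝ | ∃ (x0 : X) (y : Fin (n - 1) → X),
    0 < ‖x0‖ ^ 2 + ∑ j, ‖y j‖ ^ 2 ∧ c = njRatio x0 y}

noncomputable def lowerNJ (X : Type*) [NormedAddCommGroup X] [NormedSpace ℝ X] (n : ℕ) : ℝ :=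
  sInf {c : ℝ | ∃ (x0 : X) (y : Fin (n - 1) → X),
    0 < ‖x0‖ ^ 2 + ∑ j, ‖y j‖ ^ 2 ∧ c = njRatio x0 y}

noncomputable def upperMNJ (X : Type*) [NormedAddCommGroup X] [NormedSpace ℝ X] (n : ℕ) : ℝ :=
  sSup {c : ℝ | ∃ (x0 : X) (y : Fin (n - 1) → X),
    ‖x0‖ = 1 ∧ (∀ j, ‖y j‖ = 1) ∧ c = njRatio x0 y}

noncomputable def lowerMNJ (X : Type*) [NormedAddCommGroup X] [NormedSpace ℝ X] (n : ℕ) : ℝ :=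
  sInf {c : ℝ | ∃ (x0 : X) (y : Fin (n - 1) → X),
    ‖x0‖ = 1 ∧ (∀ j, ‖y j‖ = 1) ∧ c = njRatio x0 y}

section Aux

variable {X : Type*} [NormedAddCommGroup X] [NormedSpace ℝ X]

lemma if_true_coef : (if (true : Bool) = true then (1 : ℝ) else -1) = 1 := rfl
lemma if_false_coef : (if (false : Bool) = true then (1 : ℝ) else -1) = -1 := rfl

/-- Sum over sign patterns splits via `Fin.cons`. -/
lemma sum_signs_cons {m : ℕ} (f : (Fin (m + 1) → Bool) → ℝ) :
    ∑ ε : Fin (m + 1) → Bool, f ε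
      = ∑ ε : Fin m → Bool, (f (Fin.cons true ε) + f (Fin.cons false ε)) := by
  rw [← Equiv.sum_comp (Fin.consEquiv fun _ => Bool) f]
  rw [Fintype.sum_prod_type]
  rw [Fintype.sum_bool]
  rw [← Finset.sum_add_distrib]
  rfl

lemma card_signs (m : ℕ) : (Finset.univ : Finset (Fin m → Bool)).card = 2 ^ m := by
  rw [Finset.card_univ]
  simp

/-- Parallelogram law implies the generalized identity. -/
lemma nj_sum_eq (hp : ∀ x y : X, ‖x + y‖ ^ 2 + ‖x - y‖ ^ 2 = 2 * ‖x‖ ^ 2 + 2 * ‖y‖ ^ 2) :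
    ∀ (m : ℕ) (x0 : X) (y : Fin m → X),
      ∑ ε : Fin m → Bool, ‖x0 + ∑ j, (if ε j then (1 : ℝ) else -1) • y j‖ ^ 2
        = 2 ^ m * (‖x0‖ ^ 2 + ∑ j, ‖y j‖ ^ 2) := by
  intro m
  induction m with
  | zero => intro x0 y; simp
  | succ m ih =>
    intro x0 y
    rw [sum_signs_cons]
    have key : ∀ ε : Fin m → Bool,
        ‖x0 + ∑ j, (if (Fin.cons true ε : Fin (m+1) → Bool) j then (1:ℝ) else -1) • y j‖ ^ 2
          + ‖x0 + ∑ j, (if (Fin.cons false ε : Fin (m+1) → Bool) j then (1:ℝ) else -1) • y j‖ ^ 2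
        = 2 * ‖x0 + ∑ j : Fin m, (if ε j then (1:ℝ) else -1) • y j.succ‖ ^ 2
          + 2 * ‖y 0‖ ^ 2 := by
      intro ε
      have h1 : ∀ b : Bool,
          (∑ j, (if (Fin.cons b ε : Fin (m+1) → Bool) j then (1:ℝ) else -1) • y j)
            = (if b then (1:ℝ) else -1) • y 0
              + ∑ j : Fin m, (if ε j then (1:ℝ) else -1) • y j.succ := by
        intro b
        rw [Fin.sum_univ_succ]
        simp [Fin.cons_zero, Fin.cons_succ]
      rw [h1 true, h1 false, if_true_coef, if_false_coef]
      set S := ∑ j : Fin m, (if ε j then (1:ℝ) else -1) • y j.succ with hS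
      have e1 : x0 + ((1:ℝ) • y 0 + S) = (x0 + S) + y 0 := by
        rw [one_smul]; abel
      have e2 : x0 + ((-1:ℝ) • y 0 + S) = (x0 + S) - y 0 := by
        rw [neg_one_smul]; abel
      rw [e1, e2, hp (x0 + S) (y 0)]
    rw [Finset.sum_congr rfl (fun ε _ => key ε)]
    rw [Finset.sum_add_distrib, ← Finset.mul_sum, ih x0 (fun j => y j.succ),
      Finset.sum_const, card_signs]
    rw [Fin.sum_univ_succ (fun j => ‖y j‖ ^ 2)]
    push_cast
    ring

lemma njRatio_eq_one (hp : ∀ x y : X, ‖x + y‖ ^ 2 + ‖x - y‖ ^ 2 = 2 * ‖x‖ ^ 2 + 2 * ‖y‖ ^ 2)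
    {m : ℕ} (x0 : X) (y : Fin m → X) (h : 0 < ‖x0‖ ^ 2 + ∑ j, ‖y j‖ ^ 2) :
    njRatio x0 y = 1 := by
  unfold njRatio
  rw [nj_sum_eq hp m x0 y]
  exact div_self (by positivity)

lemma njRatio_nonneg {m : ℕ} (x0 : X) (y : Fin m → X) : 0 ≤ njRatio x0 y := by
  unfold njRatio
  apply div_nonneg
  · exact Finset.sum_nonneg fun ε _ => by positivity
  · positivity

/-- Uniform upper bound on `njRatio`. -/
lemma njRatio_le {m : ℕ} (x0 : X) (y : Fin m → X)
    (h : 0 < ‖x0‖ ^ 2 + ∑ j, ‖y j‖ ^ 2) :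
    njRatio x0 y ≤ (m + 1 : ℝ) := by
  unfold njRatio
  rw [div_le_iff₀ (by positivity)]
  have hterm : ∀ ε : Fin m → Bool,
      ‖x0 + ∑ j, (if ε j then (1:ℝ) else -1) • y j‖ ^ 2
        ≤ (m + 1 : ℝ) * (‖x0‖ ^ 2 + ∑ j, ‖y j‖ ^ 2) := by
    intro ε
    have h1 : ‖x0 + ∑ j, (if ε j then (1:ℝ) else -1) • y j‖ ≤ ‖x0‖ + ∑ j, ‖y j‖ := by
      calc ‖x0 + ∑ j, (if ε j then (1:ℝ) else -1) • y j‖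
          ≤ ‖x0‖ + ‖∑ j, (if ε j then (1:ℝ) else -1) • y j‖ := norm_add_le _ _
        _ ≤ ‖x0‖ + ∑ j, ‖(if ε j then (1:ℝ) else -1) • y j‖ := by
            gcongr; exact norm_sum_le _ _
        _ = ‖x0‖ + ∑ j, ‖y j‖ := by
            congr 1
            refine Finset.sum_congr rfl fun j _ => ?_
            rw [norm_smul]
            rcases Bool.eq_false_or_eq_true (ε j) with hb | hb <;> simp [hb]
    have h2 : ‖x0 + ∑ j, (if ε j then (1:ℝ) else -1) • y j‖ ^ 2
        ≤ (‖x0‖ + ∑ j, ‖y j‖) ^ 2 := by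
      apply pow_le_pow_left₀ (norm_nonneg _) h1
    refine h2.trans ?_
    have h3 : (‖x0‖ + ∑ j, ‖y j‖) = ∑ i : Fin (m + 1), Fin.cons ‖x0‖ (fun j => ‖y j‖) i := by
      rw [Fin.sum_univ_succ]; simp
    have h4 : (‖x0‖ ^ 2 + ∑ j, ‖y j‖ ^ 2)
        = ∑ i : Fin (m + 1), (Fin.cons ‖x0‖ (fun j => ‖y j‖) i) ^ 2 := by
      rw [Fin.sum_univ_succ]; simp
    rw [h3, h4]
    have := sq_sum_le_card_mul_sum_sq (s := (Finset.univ : Finset (Fin (m+1))))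
      (f := fun i => Fin.cons ‖x0‖ (fun j => ‖y j‖) i)
    simpa using this
  calc ∑ ε : Fin m → Bool, ‖x0 + ∑ j, (if ε j then (1:ℝ) else -1) • y j‖ ^ 2
      ≤ ∑ _ε : Fin m → Bool, (m + 1 : ℝ) * (‖x0‖ ^ 2 + ∑ j, ‖y j‖ ^ 2) :=
        Finset.sum_le_sum fun ε _ => hterm ε
    _ = 2 ^ m * ((m + 1 : ℝ) * (‖x0‖ ^ 2 + ∑ j, ‖y j‖ ^ 2)) := by
        rw [Finset.sum_const, card_signs, nsmul_eq_mul]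
        push_cast
        ring
    _ = (m + 1 : ℝ) * (2 ^ m * (‖x0‖ ^ 2 + ∑ j, ‖y j‖ ^ 2)) := by ring

lemma pair_den_eq {m : ℕ} (x y : X) :
    (‖x‖ ^ 2 + ∑ j, ‖(Fin.cons y (0 : Fin m → X) : Fin (m+1) → X) j‖ ^ 2)
      = ‖x‖ ^ 2 + ‖y‖ ^ 2 := by
  have h : (fun j => ‖(Fin.cons y (0 : Fin m → X) : Fin (m+1) → X) j‖ ^ 2)
      = Fin.cons (‖y‖ ^ 2) (fun _ => (0 : ℝ)) := by
    funext j
    refine Fin.cases ?_ ?_ j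
    · simp
    · intro i; simp
  rw [h, Fin.sum_cons]
  simp

/-- Value of `njRatio` on a two-vector configuration. -/
lemma njRatio_pair {m : ℕ} (x y : X) :
    njRatio x (Fin.cons y (0 : Fin m → X)) =
      (‖x + y‖ ^ 2 + ‖x - y‖ ^ 2) / (2 * (‖x‖ ^ 2 + ‖y‖ ^ 2)) := by
  unfold njRatio
  have hsum : ∀ ε : Fin (m + 1) → Bool,
      (∑ j, (if ε j then (1:ℝ) else -1) • (Fin.cons y (0 : Fin m → X)) j)
        = (if ε 0 then (1:ℝ) else -1) • y := by
    intro ε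
    rw [Fin.sum_univ_succ]
    simp [Fin.cons_zero, Fin.cons_succ]
  have hnum : (∑ ε : Fin (m+1) → Bool,
      ‖x + ∑ j, (if ε j then (1:ℝ) else -1) • (Fin.cons y (0 : Fin m → X)) j‖ ^ 2)
      = 2 ^ m * (‖x + y‖ ^ 2 + ‖x - y‖ ^ 2) := by
    rw [Finset.sum_congr rfl fun ε _ => by rw [hsum ε]]
    rw [sum_signs_cons (fun ε => ‖x + (if ε 0 then (1:ℝ) else -1) • y‖ ^ 2)]
    simp only [Fin.cons_zero, eq_self_iff_true, if_true, Bool.false_eq_true, if_false,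
      one_smul, neg_one_smul]
    rw [show x + -y = x - y from (sub_eq_add_neg x y).symm]
    rw [Finset.sum_const, card_signs, nsmul_eq_mul]
    push_cast
    ring
  rw [hnum, pair_den_eq x y]
  rw [show (2:ℝ) ^ (m + 1) * (‖x‖ ^ 2 + ‖y‖ ^ 2) = 2 ^ m * (2 * (‖x‖ ^ 2 + ‖y‖ ^ 2)) by ring]
  rcases eq_or_ne (‖x‖ ^ 2 + ‖y‖ ^ 2) 0 with h0 | h0
  · rw [h0]; simp
  · rw [mul_div_mul_left _ _ (by positivity : (2:ℝ) ^ m ≠ 0)]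

end Aux

theorem stmt_3 (X : Type*) [NormedAddCommGroup X] [NormedSpace ℝ X] [CompleteSpace X]
    [Nontrivial X] (n : ℕ) (hn : 2 ≤ n) :
    ((∀ x y : X, ‖x + y‖ ^ 2 + ‖x - y‖ ^ 2 = 2 * ‖x‖ ^ 2 + 2 * ‖y‖ ^ 2) ↔ upperNJ X n = 1) ∧
    ((∀ x y : X, ‖x + y‖ ^ 2 + ‖x - y‖ ^ 2 = 2 * ‖x‖ ^ 2 + 2 * ‖y‖ ^ 2) ↔ lowerNJ X n = 1) := by
  obtain ⟨m', hm'⟩ : ∃ m', n - 1 = m' + 1 := ⟨n - 2, by omega⟩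
  set S : Set ℝ := {c : ℝ | ∃ (x0 : X) (y : Fin (m' + 1) → X),
    0 < ‖x0‖ ^ 2 + ∑ j, ‖y j‖ ^ 2 ∧ c = njRatio x0 y} with hS
  have hU : upperNJ X n = sSup S := by rw [upperNJ, hm']
  have hL : lowerNJ X n = sInf S := by rw [lowerNJ, hm']
  -- S is nonempty
  obtain ⟨v, hv⟩ := exists_ne (0 : X)
  have hv2 : 0 < ‖v‖ ^ 2 + ∑ j : Fin (m' + 1), ‖(0 : Fin (m' + 1) → X) j‖ ^ 2 := by
    have : 0 < ‖v‖ := norm_pos_iff.mpr hv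
    simp
    positivity
  have hSne : S.Nonempty := ⟨njRatio v (0 : Fin (m' + 1) → X), v, 0, hv2, rfl⟩
  have hbddA : BddAbove S := by
    refine ⟨((m' + 1 : ℕ) : ℝ) + 1, fun c hc => ?_⟩
    obtain ⟨x0, y, hpos, rfl⟩ := hc
    exact njRatio_le x0 y hpos
  have hbddB : BddBelow S := by
    refine ⟨0, fun c hc => ?_⟩
    obtain ⟨x0, y, hpos, rfl⟩ := hc
    exact njRatio_nonneg x0 y
  -- forward: parallelogram implies S = {1}
  have hfwd : (∀ x y : X, ‖x + y‖ ^ 2 + ‖x - y‖ ^ 2 = 2 * ‖x‖ ^ 2 + 2 * ‖y‖ ^ 2) →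
      S = {1} := by
    intro hp
    apply Set.eq_singleton_iff_unique_mem.mpr
    constructor
    · exact ⟨v, 0, hv2, (njRatio_eq_one hp v 0 hv2).symm⟩
    · rintro c ⟨x0, y, hpos, rfl⟩
      exact njRatio_eq_one hp x0 y hpos
  -- backward: failure of parallelogram gives elements of S both >1 and <1
  have hbwd : ¬ (∀ x y : X, ‖x + y‖ ^ 2 + ‖x - y‖ ^ 2 = 2 * ‖x‖ ^ 2 + 2 * ‖y‖ ^ 2) →
      (∃ c ∈ S, 1 < c) ∧ (∃ c ∈ S, c < 1) := by
    intro hnp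
    push_neg at hnp
    obtain ⟨x, y, hxy⟩ := hnp
    have hxy0 : 0 < ‖x‖ ^ 2 + ‖y‖ ^ 2 := by
      rcases eq_or_ne x 0 with rfl | hx
      · rcases eq_or_ne y 0 with rfl | hy
        · exfalso; apply hxy; simp
        · have : 0 < ‖y‖ := norm_pos_iff.mpr hy
          positivity
      · have : 0 < ‖x‖ := norm_pos_iff.mpr hx
        positivity
    have hmem : ∀ (a b : X), 0 < ‖a‖ ^ 2 + ‖b‖ ^ 2 →
        (‖a + b‖ ^ 2 + ‖a - b‖ ^ 2) / (2 * (‖a‖ ^ 2 + ‖b‖ ^ 2)) ∈ S := by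
      intro a b hab
      refine ⟨a, Fin.cons b (0 : Fin m' → X), ?_, (njRatio_pair a b).symm⟩
      rw [pair_den_eq]
      exact hab
    have huv0 : 0 < ‖x + y‖ ^ 2 + ‖x - y‖ ^ 2 := by
      rcases eq_or_ne (x + y) 0 with h1 | h1
      · rcases eq_or_ne (x - y) 0 with h2 | h2
        · exfalso
          have hx0 : x = 0 := by
            have h2x : (2:ℝ) • x = 0 := by
              rw [two_smul, show x + x = (x + y) + (x - y) by abel, h1, h2]; simp
            rcases smul_eq_zero.mp h2x with h | h
            · norm_num at h
            · exact h
          have hy0 : y = 0 := by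
            have h2y : (2:ℝ) • y = 0 := by
              rw [two_smul, show y + y = (x + y) - (x - y) by abel, h1, h2]; simp
            rcases smul_eq_zero.mp h2y with h | h
            · norm_num at h
            · exact h
          rw [hx0, hy0] at hxy0; simp at hxy0
        · have : 0 < ‖x - y‖ := norm_pos_iff.mpr h2
          positivity
      · have : 0 < ‖x + y‖ := norm_pos_iff.mpr h1
        positivity
    set A := ‖x + y‖ ^ 2 + ‖x - y‖ ^ 2 with hA
    set B := 2 * (‖x‖ ^ 2 + ‖y‖ ^ 2) with hB
    have hBpos : 0 < B := by positivity
    have hApos : 0 < A := huv0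
    have hAB : A ≠ B := by
      intro h; apply hxy
      rw [show (2 * ‖x‖ ^ 2 + 2 * ‖y‖ ^ 2 : ℝ) = B by rw [hB]; ring, ← h]
    have hc1 : A / B ∈ S := hmem x y hxy0
    have hswap : (‖(x+y) + (x-y)‖ ^ 2 + ‖(x+y) - (x-y)‖ ^ 2) /
        (2 * (‖x+y‖ ^ 2 + ‖x-y‖ ^ 2)) ∈ S := hmem (x+y) (x-y) huv0
    have hswapval : (‖(x+y) + (x-y)‖ ^ 2 + ‖(x+y) - (x-y)‖ ^ 2) /
        (2 * (‖x+y‖ ^ 2 + ‖x-y‖ ^ 2)) = (2 * B) / (2 * A) := by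
      have e1 : (x+y) + (x-y) = (2:ℝ) • x := by rw [two_smul]; abel
      have e2 : (x+y) - (x-y) = (2:ℝ) • y := by rw [two_smul]; abel
      rw [e1, e2, norm_smul, norm_smul]
      rw [hA, hB]
      simp only [Real.norm_ofNat]
      ring_nf
    rw [hswapval] at hswap
    rcases lt_or_gt_of_ne hAB with hlt | hgt
    · constructor
      · refine ⟨(2*B)/(2*A), hswap, ?_⟩
        rw [lt_div_iff₀ (by positivity)]
        nlinarith
      · refine ⟨A/B, hc1, ?_⟩
        rw [div_lt_one hBpos]; exact hlt
    · constructor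
      · refine ⟨A/B, hc1, ?_⟩
        rw [lt_div_iff₀ hBpos]; nlinarith
      · refine ⟨(2*B)/(2*A), hswap, ?_⟩
        rw [div_lt_one (by positivity)]
        nlinarith
  constructor
  · constructor
    · intro hp
      rw [hU, hfwd hp, csSup_singleton]
    · intro hsup
      by_contra hnp
      obtain ⟨⟨c, hcS, hc1⟩, _⟩ := hbwd hnp
      have : c ≤ upperNJ X n := hU ▸ le_csSup hbddA hcS
      rw [hsup] at this
      linarith
  · constructor
    · intro hp
      rw [hL, hfwd hp, csInf_singleton]
    · intro hinf
      by_contra hnp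
      obtain ⟨_, ⟨c, hcS, hc1⟩⟩ := hbwd hnp
      have : lowerNJ X n ≤ c := hL ▸ csInf_le hbddB hcS
      rw [hinf] at this
      linarith
end

section
/- Let n ≥ 2 be an integer and let k ≥ 2^{n−1} be an integer. Let ℓ_k^∞ denote ℝ^k equipped with the supremum norm ‖(t_1,…,t_k)‖ = max_{1 ≤ i ≤ k} |t_i|. Then C̄_NJ^{(n)}(ℓ_k^∞) = C̄_mNJ^{(n)}(ℓ_k^∞) = n. The same equalities hold for the infinite-dimensional space ℓ^∞ of bounded real sequences. -/
open Finset MeasureTheory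

/-!
By the triangle inequality and Cauchy–Schwarz, every signed sum satisfies
`‖x₁ + ∑ θⱼ xⱼ‖² ≤ (‖x₁‖ + ∑ ‖xⱼ‖)² ≤ n ∑ ‖xⱼ‖²`, so `n` bounds both constants in any normed space.
In `ℓ^∞(κ)` the bound is attained as soon as `κ` surjects onto the sign patterns
`s : κ → {±1}ⁿ⁻¹`: take `x₁ ≡ 1` and `xⱼ₊₁(i) = s(i)ⱼ`; at a coordinate `i` with `s(i) = θ`
every signed sum equals `n`. This covers `ℓ^∞(ℕ)` and `ℓ^∞(Fin k)` for `k ≥ 2ⁿ⁻¹`, and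
`ℓ_k^∞` is isometric to `ℓ^∞(Fin k)`.
-/

open Function

def boolSign (b : Bool) : ℝ := if b then 1 else -1

@[simp]
theorem abs_boolSign (b : Bool) : |boolSign b| = 1 := by
  cases b <;> simp [boolSign]

@[simp]
theorem boolSign_mul_self (b : Bool) : boolSign b * boolSign b = 1 := by
  cases b <;> simp [boolSign]

section NJRatio

variable {X Y : Type*} [NormedAddCommGroup X] [NormedSpace ℝ X]
  [NormedAddCommGroup Y] [NormedSpace ℝ Y] {m : ℕ}

def signedSum (x₀ : X) (y : Fin m → X) (ε : Fin m → Bool) : X :=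
  x₀ + ∑ j, boolSign (ε j) • y j

theorem njRatio_eq_signedSum (x₀ : X) (y : Fin m → X) :
    njRatio x₀ y =
      (∑ ε, ‖signedSum x₀ y ε‖ ^ 2) / (2 ^ m * (‖x₀‖ ^ 2 + ∑ j, ‖y j‖ ^ 2)) :=
  rfl

theorem norm_signedSum_le (x₀ : X) (y : Fin m → X) (ε : Fin m → Bool) :
    ‖signedSum x₀ y ε‖ ≤ ‖x₀‖ + ∑ j, ‖y j‖ := by
  refine (norm_add_le _ _).trans (add_le_add le_rfl ((norm_sum_le _ _).trans_eq ?_))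
  simp [norm_smul]

theorem sq_add_sum_le_succ_mul (a : ℝ) (b : Fin m → ℝ) :
    (a + ∑ j, b j) ^ 2 ≤ (m + 1) * (a ^ 2 + ∑ j, b j ^ 2) := by
  simpa [Fin.sum_univ_succ] using sq_sum_le_card_mul_sum_sq (s := univ) (f := Fin.cons a b)

theorem njRatio_le_succ (x₀ : X) (y : Fin m → X) : njRatio x₀ y ≤ m + 1 := by
  rw [njRatio_eq_signedSum]
  refine div_le_of_le_mul₀ (by positivity) (by positivity) ?_
  calc ∑ ε, ‖signedSum x₀ y ε‖ ^ 2
      ≤ ∑ _ε : Fin m → Bool, (m + 1) * (‖x₀‖ ^ 2 + ∑ j, ‖y j‖ ^ 2) := by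
        gcongr with ε
        exact (pow_le_pow_left₀ (norm_nonneg _) (norm_signedSum_le x₀ y ε) 2).trans
          (sq_add_sum_le_succ_mul _ _)
    _ = (m + 1) * (2 ^ m * (‖x₀‖ ^ 2 + ∑ j, ‖y j‖ ^ 2)) := by
        simp only [sum_const, card_univ, Fintype.card_fun, Fintype.card_bool, Fintype.card_fin,
          nsmul_eq_mul, Nat.cast_pow, Nat.cast_ofNat]
        ring

def IsNJExtremal (x₀ : X) (y : Fin m → X) : Prop :=
  ‖x₀‖ = 1 ∧ (∀ j, ‖y j‖ = 1) ∧ ∀ ε, (m + 1 : ℝ) ≤ ‖signedSum x₀ y ε‖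

theorem IsNJExtremal.njRatio_eq {x₀ : X} {y : Fin m → X} (h : IsNJExtremal x₀ y) :
    njRatio x₀ y = m + 1 := by
  obtain ⟨h₀, hy, hε⟩ := h
  refine (njRatio_le_succ x₀ y).antisymm ?_
  rw [njRatio_eq_signedSum, le_div_iff₀ (by positivity)]
  simp only [h₀, hy]
  calc (m + 1 : ℝ) * (2 ^ m * (1 ^ 2 + ∑ _j : Fin m, (1 : ℝ) ^ 2))
      = ∑ _ε : Fin m → Bool, (m + 1 : ℝ) ^ 2 := by
        simp only [sum_const, card_univ, Fintype.card_fun, Fintype.card_bool, Fintype.card_fin,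
          nsmul_eq_mul, Nat.cast_pow, Nat.cast_ofNat]
        ring
    _ ≤ ∑ ε, ‖signedSum x₀ y ε‖ ^ 2 := by
        gcongr with ε
        exact hε ε

theorem signedSum_map (L : X →ₗᵢ[ℝ] Y) (x₀ : X) (y : Fin m → X) (ε : Fin m → Bool) :
    signedSum (L x₀) (fun j => L (y j)) ε = L (signedSum x₀ y ε) := by
  simp only [signedSum, map_add, map_sum, map_smul]

theorem IsNJExtremal.map {x₀ : X} {y : Fin m → X} (h : IsNJExtremal x₀ y) (L : X →ₗᵢ[ℝ] Y) :
    IsNJExtremal (L x₀) (fun j => L (y j)) := by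
  obtain ⟨h₀, hy, hε⟩ := h
  refine ⟨by rw [L.norm_map, h₀], fun j => by rw [L.norm_map, hy j], fun ε => ?_⟩
  rw [signedSum_map, L.norm_map]
  exact hε ε

theorem upperNJ_eq_of_isNJExtremal {n : ℕ} (hn : 1 ≤ n) {x₀ : X} {y : Fin (n - 1) → X}
    (h : IsNJExtremal x₀ y) : upperNJ X n = n := by
  have hr : njRatio x₀ y = n := by simpa [Nat.cast_sub hn] using h.njRatio_eq
  refine IsGreatest.csSup_eq ⟨⟨x₀, y, by rw [h.1]; positivity, hr.symm⟩, ?_⟩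
  rintro c ⟨x₀', y', -, rfl⟩
  simpa [Nat.cast_sub hn] using njRatio_le_succ x₀' y'

theorem upperMNJ_eq_of_isNJExtremal {n : ℕ} (hn : 1 ≤ n) {x₀ : X} {y : Fin (n - 1) → X}
    (h : IsNJExtremal x₀ y) : upperMNJ X n = n := by
  have hr : njRatio x₀ y = n := by simpa [Nat.cast_sub hn] using h.njRatio_eq
  refine IsGreatest.csSup_eq ⟨⟨x₀, y, h.1, h.2.1, hr.symm⟩, ?_⟩
  rintro c ⟨x₀', y', -, -, rfl⟩
  simpa [Nat.cast_sub hn] using njRatio_le_succ x₀' y'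

end NJRatio

section SignVectors

variable {κ : Type*} {m : ℕ}

def signVec (σ : κ → Bool) : lp (fun _ : κ => ℝ) ⊤ :=
  ⟨fun i => boolSign (σ i), memℓp_infty ⟨1, by rintro _ ⟨i, rfl⟩; simp⟩⟩

@[simp]
theorem signVec_apply (σ : κ → Bool) (i : κ) : signVec σ i = boolSign (σ i) :=
  rfl

theorem norm_signVec [Nonempty κ] (σ : κ → Bool) : ‖signVec σ‖ = 1 := by
  have hσ : ∀ i, ‖signVec σ i‖ = 1 := fun i => by simp
  refine (lp.norm_le_of_forall_le zero_le_one fun i => (hσ i).le).antisymm ?_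
  obtain ⟨i⟩ := ‹Nonempty κ›
  exact (hσ i).symm.le.trans (lp.norm_apply_le_norm ENNReal.top_ne_zero _ i)

theorem signedSum_signVec_apply (s : κ → Fin m → Bool) (ε : Fin m → Bool) (i : κ) :
    signedSum (signVec fun _ => true) (fun j => signVec fun i => s i j) ε i =
      1 + ∑ j, boolSign (ε j) * boolSign (s i j) := by
  simp only [signedSum, lp.coeFn_add, Pi.add_apply, lp.coeFn_sum, Finset.sum_apply,
    lp.coeFn_smul, Pi.smul_apply, signVec_apply, smul_eq_mul]
  rfl

theorem isNJExtremal_signVec {s : κ → Fin m → Bool} (hs : Surjective s) :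
    IsNJExtremal (signVec fun _ => true) (fun j => signVec fun i => s i j) := by
  have : Nonempty κ := ⟨(hs fun _ => true).choose⟩
  refine ⟨norm_signVec _, fun j => norm_signVec _, fun ε => ?_⟩
  obtain ⟨i, rfl⟩ := hs ε
  refine le_trans (le_of_eq ?_) (lp.norm_apply_le_norm ENNReal.top_ne_zero _ i)
  rw [signedSum_signVec_apply, Real.norm_eq_abs]
  simp only [boolSign_mul_self, sum_const, card_univ, Fintype.card_fin, nsmul_eq_mul, mul_one]
  rw [abs_of_nonneg (by positivity), add_comm]

end SignVectors

theorem stmt_10 (n : ℕ) (hn : 2 ≤ n) (k : ℕ) (hk : 2 ^ (n - 1) ≤ k) :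
    upperNJ (PiLp ⊤ (fun (_ : Fin k) => ℝ)) n = (n : ℝ) ∧
    upperMNJ (PiLp ⊤ (fun (_ : Fin k) => ℝ)) n = (n : ℝ) ∧
    upperNJ (lp (fun (_ : ℕ) => ℝ) ⊤) n = (n : ℝ) ∧
    upperMNJ (lp (fun (_ : ℕ) => ℝ) ⊤) n = (n : ℝ) := by
  have hn₁ : 1 ≤ n := by omega
  obtain ⟨e⟩ : Nonempty ((Fin (n - 1) → Bool) ↪ Fin k) :=
    Embedding.nonempty_of_card_le (by simpa using hk)
  have hPi := (isNJExtremal_signVec (invFun_surjective e.injective)).map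
    (lpPiLpₗᵢ (fun _ : Fin k => ℝ) ℝ).toLinearIsometry
  have hℕ := isNJExtremal_signVec (κ := ℕ) (m := n - 1)
    (invFun_surjective (Fin.val_injective.comp (Fintype.equivFin _).injective))
  exact ⟨upperNJ_eq_of_isNJExtremal hn₁ hPi, upperMNJ_eq_of_isNJExtremal hn₁ hPi,
    upperNJ_eq_of_isNJExtremal hn₁ hℕ, upperMNJ_eq_of_isNJExtremal hn₁ hℕ⟩
end
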